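/- Mean-squared-error bound for greedy load balancing (Theorem 4): let L : Fin N → ℝ be the final machine loads produced by the greedy algorithm on a list of nonnegative weights w_1, …, w_F, let L_opt = (∑_{i} w_i)/N, and let w_max = max_{i} w_i. Then the mean squared error of the loads about the ideal uniform load is bounded by the square of the largest weight: (1/N) · ∑_{j} (L j − L_opt)² ≤ w_max². -/

import Mathlib

open Finset

/-- The machine of minimal current load, ties broken by lowest machine index. -/
noncomputable def minIdx {N : ℕ} [NeZero N] (loads : Fin N → ℝ) : Fin N :=
  (Finset.univ.filter fun j => ∀ i, loads j ≤ loads i).min' (by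
    classical
    obtain ⟨j, -, hj⟩ := Finset.exists_min_image (Finset.univ : Finset (Fin N)) loads
      Finset.univ_nonempty
    exact ⟨j, Finset.mem_filter.mpr ⟨Finset.mem_univ j, fun i => hj i (Finset.mem_univ i)⟩⟩)

/-- Final machine loads of the list-scheduling greedy algorithm: process the
weights in list order, starting from all-zero loads, each time adding the weight
to a machine of minimal current cumulative load (lowest index on ties). -/
noncomputable def greedyLoads (N : ℕ) [NeZero N] (ws : List ℝ) : Fin N → ℝ :=
  ws.foldl
    (fun loads w => Function.update loads (minIdx loads) (loads (minIdx loads) + w))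
    (fun _ => 0)

/-!
If all loads lie within `M` of each other and `0 ≤ w ≤ M`, adding `w` to a least loaded
machine keeps them within `M` of each other: the new load is at most `min + M`, and no load
decreases. Starting from equal loads, the greedy loads therefore lie within `w_max` of each
other, hence each lies within `w_max` of their mean `(∑ w)/N`, and the mean squared deviation
is at most `w_max²`.
-/

lemma List.le_foldr_max {α : Type*} [LinearOrder α] (l : List α) (b : α) :
    b ≤ l.foldr max b := by
  induction l with
  | nil => exact le_rfl
  | cons a l ih => exact le_max_of_le_right ih

section Spread

variable {ι : Type*} [Fintype ι]

lemma abs_sub_mean_le_of_spread [Nonempty ι] {x : ι → ℝ} {M : ℝ}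
    (hx : ∀ j k, x j ≤ x k + M) (j : ι) :
    |x j - (∑ k, x k) / Fintype.card ι| ≤ M := by
  have hn : (0 : ℝ) < Fintype.card ι := by exact_mod_cast Fintype.card_pos
  have hupper : ∑ k, x k ≤ Fintype.card ι • (x j + M) :=
    Finset.sum_le_card_nsmul univ x (x j + M) fun k _ => hx k j
  have hlower : Fintype.card ι • (x j - M) ≤ ∑ k, x k :=
    Finset.card_nsmul_le_sum univ x (x j - M) fun k _ => by linarith [hx j k]
  rw [nsmul_eq_mul] at hupper hlower
  have hmean_le : (∑ k, x k) / Fintype.card ι ≤ x j + M := by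
    rwa [div_le_iff₀ hn, mul_comm]
  have hle_mean : x j - M ≤ (∑ k, x k) / Fintype.card ι := by
    rwa [le_div_iff₀ hn, mul_comm]
  rw [abs_sub_le_iff]
  constructor <;> linarith

lemma mean_sq_sub_mean_le_of_spread {x : ι → ℝ} {M : ℝ} (hx : ∀ j k, x j ≤ x k + M) :
    (1 / (Fintype.card ι : ℝ)) * ∑ j, (x j - (∑ k, x k) / Fintype.card ι) ^ 2 ≤ M ^ 2 := by
  rcases isEmpty_or_nonempty ι with _ | _
  · simp [sq_nonneg]
  calc (1 / (Fintype.card ι : ℝ)) * ∑ j, (x j - (∑ k, x k) / Fintype.card ι) ^ 2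
      ≤ (1 / (Fintype.card ι : ℝ)) * ∑ _j : ι, M ^ 2 := by
        gcongr _ * ∑ j, ?_ with j
        exact sq_le_sq.mpr ((abs_sub_mean_le_of_spread hx j).trans (le_abs_self M))
    _ = M ^ 2 := by
        have hn : (Fintype.card ι : ℝ) ≠ 0 := by exact_mod_cast Fintype.card_ne_zero
        rw [sum_const, card_univ, nsmul_eq_mul]
        field_simp

end Spread

section Greedy

variable {N : ℕ} [NeZero N]

lemma minIdx_le (loads : Fin N → ℝ) (i : Fin N) : loads (minIdx loads) ≤ loads i :=
  (mem_filter.mp (min'_mem (univ.filter fun j => ∀ i, loads j ≤ loads i) _)).2 i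

noncomputable def greedyStep (loads : Fin N → ℝ) (w : ℝ) : Fin N → ℝ :=
  Function.update loads (minIdx loads) (loads (minIdx loads) + w)

lemma greedyLoads_eq_foldl (ws : List ℝ) : greedyLoads N ws = ws.foldl greedyStep 0 := rfl

lemma sum_greedyStep (loads : Fin N → ℝ) (w : ℝ) :
    ∑ j, greedyStep loads w j = ∑ j, loads j + w := by
  rw [greedyStep, sum_update_of_mem (mem_univ _), ← add_sum_erase _ loads (mem_univ _),
    erase_eq]
  ring

lemma sum_foldl_greedyStep (ws : List ℝ) (loads : Fin N → ℝ) :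
    ∑ j, ws.foldl greedyStep loads j = ∑ j, loads j + ws.sum := by
  induction ws generalizing loads with
  | nil => simp
  | cons w ws ih => rw [List.foldl_cons, ih, sum_greedyStep, List.sum_cons, add_assoc]

lemma greedyStep_spread {loads : Fin N → ℝ} {w M : ℝ} (hloads : ∀ j k, loads j ≤ loads k + M)
    (hw₀ : 0 ≤ w) (hwM : w ≤ M) (j k : Fin N) :
    greedyStep loads w j ≤ greedyStep loads w k + M := by
  simp only [greedyStep, Function.update_apply]
  split_ifs
  · linarith
  · linarith [minIdx_le loads k]
  · linarith [hloads j (minIdx loads)]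
  · exact hloads j k

lemma foldl_greedyStep_spread {ws : List ℝ} {M : ℝ} (hws : ∀ w ∈ ws, 0 ≤ w ∧ w ≤ M)
    {loads : Fin N → ℝ} (hloads : ∀ j k, loads j ≤ loads k + M) (j k : Fin N) :
    ws.foldl greedyStep loads j ≤ ws.foldl greedyStep loads k + M := by
  induction ws generalizing loads with
  | nil => exact hloads j k
  | cons w ws ih =>
    obtain ⟨hw₀, hwM⟩ := hws w List.mem_cons_self
    exact ih (fun v hv => hws v (List.mem_cons_of_mem _ hv))
      (greedyStep_spread hloads hw₀ hwM)

end Greedy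

/-- Theorem 4: the mean squared error of the greedy loads about the
ideal uniform load `L_opt = (∑ w)/N` is at most `w_max²`. -/
theorem greedy_mse_le (N : ℕ) [NeZero N] (ws : List ℝ)
    (hw : ∀ w ∈ ws, 0 ≤ w) :
    (1 / (N : ℝ)) * ∑ j : Fin N, (greedyLoads N ws j - ws.sum / (N : ℝ)) ^ 2 ≤
      (ws.foldr max 0) ^ 2 := by
  have hsum : ∑ j, greedyLoads N ws j = ws.sum := by
    simp [greedyLoads_eq_foldl, sum_foldl_greedyStep]
  have hspread : ∀ j k, greedyLoads N ws j ≤ greedyLoads N ws k + ws.foldr max 0 :=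
    foldl_greedyStep_spread (fun w hw' => ⟨hw w hw', List.le_max_of_le' 0 hw' le_rfl⟩)
      (fun _ _ => le_add_of_nonneg_right (List.le_foldr_max ws 0))
  simpa [hsum] using mean_sq_sub_mean_le_of_spread hspread
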